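/- Let p1, p2, p3, pR1, pR2, pR3 ∈ ℝ² be such that the triples {p1,p2,pR1}, {p2,p3,pR2}, {p1,p3,pR3}, and {p1,p2,p3} are each noncollinear. Then the 9 × 12 rigidity matrix encoding the nine pairwise distance constraints within these three coordinate labelings (each labeling contributing three constraints among its three points, on velocity variables u1,u2,u3,uR1,uR2,uR3 ∈ ℝ²) has rank 9, hence null space of dimension 3. -/
import Mathlib


/-- The row of a rigidity matrix corresponding to the constraint
`⟨a, u i - u j⟩ = 0`: entries `a` in block `i`, `-a` in block `j`, `0` elsewhere. -/
def constraintRow {N : ℕ} (a : Fin 2 → ℝ) (i j : Fin N) : Fin N × Fin 2 → ℝ :=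
  fun q => if q.1 = i then a q.2 else if q.1 = j then -(a q.2) else 0

/-- The 9 × 12 rigidity matrix of Motif 2D3: three rigid components with
coordinate labelings `R1 = {p1, p2, pR1}`, `R2 = {p2, p3, pR2}`,
`R3 = {p1, p3, pR3}`, each contributing its three pairwise distance
constraints, acting on velocities `(u1, u2, u3, uR1, uR2, uR3) ∈ (ℝ²)⁶`
(blocks `0,…,5` respectively). -/
def rigidityMatrix2D3 (p1 p2 p3 pR1 pR2 pR3 : Fin 2 → ℝ) :
    Matrix (Fin 9) (Fin 6 × Fin 2) ℝ :=
  Matrix.of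
    ![constraintRow (p1 - p2) 0 1,
      constraintRow (p1 - pR1) 0 3,
      constraintRow (p2 - pR1) 1 3,
      constraintRow (p2 - p3) 1 2,
      constraintRow (p2 - pR2) 1 4,
      constraintRow (p3 - pR2) 2 4,
      constraintRow (p1 - p3) 0 2,
      constraintRow (p1 - pR3) 0 5,
      constraintRow (p3 - pR3) 2 5]

lemma finSucc3 : ((2:Fin 8).succ) = (3:Fin 9) := rfl
lemma finSucc4 : ((2:Fin 7).succ.succ) = (4:Fin 9) := rfl
lemma finSucc5 : ((2:Fin 6).succ.succ.succ) = (5:Fin 9) := rfl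
lemma finSucc6 : ((2:Fin 5).succ.succ.succ.succ) = (6:Fin 9) := rfl
lemma finSucc7 : ((2:Fin 4).succ.succ.succ.succ.succ) = (7:Fin 9) := rfl
lemma finSucc8 : ((2:Fin 3).succ.succ.succ.succ.succ.succ) = (8:Fin 9) := rfl

lemma collinear_of_rel {a b c : Fin 2 → ℝ} {r : ℝ} (h : a - c = r • (b - c)) :
    Collinear ℝ ({a, b, c} : Set (Fin 2 → ℝ)) := by
  rw [collinear_iff_exists_forall_eq_smul_vadd]
  refine ⟨c, b - c, ?_⟩
  intro p hp
  simp only [Set.mem_insert_iff, Set.mem_singleton_iff] at hp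
  rcases hp with rfl | rfl | rfl
  · exact ⟨r, by rw [← h]; simp⟩
  · exact ⟨1, by simp⟩
  · exact ⟨0, by simp⟩

lemma indep_of_notCollinear {a b c : Fin 2 → ℝ}
    (h : ¬ Collinear ℝ ({a, b, c} : Set (Fin 2 → ℝ)))
    {s t : ℝ} (hst : s • (a - c) + t • (b - c) = 0) : s = 0 ∧ t = 0 := by
  by_contra hc
  rw [not_and_or] at hc
  apply h
  rcases hc with hs | ht
  · have h1 : a - c = (s⁻¹ * -t) • (b - c) := by
      rw [mul_smul, neg_smul, ← eq_neg_of_add_eq_zero_left hst, inv_smul_smul₀ hs]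
    exact collinear_of_rel h1
  · have h1 : b - c = (t⁻¹ * -s) • (a - c) := by
      rw [mul_smul, neg_smul, ← eq_neg_of_add_eq_zero_right hst, inv_smul_smul₀ ht]
    rw [Set.insert_comm]
    exact collinear_of_rel h1

/-- Motif 2D3: if the triples `{p1,p2,pR1}`, `{p2,p3,pR2}`, `{p1,p3,pR3}` and
`{p1,p2,p3}` are each noncollinear, the 9 × 12 rigidity matrix has rank 9,
hence null space of dimension 3. -/
theorem motif2D3_rank (p1 p2 p3 pR1 pR2 pR3 : Fin 2 → ℝ)
    (h1 : ¬ Collinear ℝ ({p1, p2, pR1} : Set (Fin 2 → ℝ)))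
    (h2 : ¬ Collinear ℝ ({p2, p3, pR2} : Set (Fin 2 → ℝ)))
    (h3 : ¬ Collinear ℝ ({p1, p3, pR3} : Set (Fin 2 → ℝ)))
    (h4 : ¬ Collinear ℝ ({p1, p2, p3} : Set (Fin 2 → ℝ))) :
    (rigidityMatrix2D3 p1 p2 p3 pR1 pR2 pR3).rank = 9 ∧
    Module.finrank ℝ
      (LinearMap.ker (rigidityMatrix2D3 p1 p2 p3 pR1 pR2 pR3).mulVecLin) = 3 := by
  set M := rigidityMatrix2D3 p1 p2 p3 pR1 pR2 pR3 with hM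
  -- the rows of M are linearly independent: equivalently Mᵀ.mulVec is injective
  have hinj : ∀ c : Fin 9 → ℝ, M.transpose.mulVec c = 0 → c = 0 := by
    intro c h
    -- block 3 (uR1)
    have E3 : c 1 • (p1 - pR1) + c 2 • (p2 - pR1) = 0 := by
      funext k
      have hk := congrFun h (3, k)
      simp [hM, Matrix.mulVec, dotProduct, rigidityMatrix2D3, constraintRow,
        Fin.sum_univ_succ, Matrix.transpose_apply,
        finSucc3, finSucc4, finSucc5, finSucc6, finSucc7, finSucc8] at hk
      simp only [Pi.add_apply, Pi.smul_apply, Pi.sub_apply, Pi.zero_apply, smul_eq_mul]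
      linarith
    obtain ⟨hc1, hc2⟩ := indep_of_notCollinear h1 E3
    -- block 4 (uR2)
    have E4 : c 4 • (p2 - pR2) + c 5 • (p3 - pR2) = 0 := by
      funext k
      have hk := congrFun h (4, k)
      simp [hM, Matrix.mulVec, dotProduct, rigidityMatrix2D3, constraintRow,
        Fin.sum_univ_succ, Matrix.transpose_apply,
        finSucc3, finSucc4, finSucc5, finSucc6, finSucc7, finSucc8] at hk
      simp only [Pi.add_apply, Pi.smul_apply, Pi.sub_apply, Pi.zero_apply, smul_eq_mul]
      linarith
    obtain ⟨hc4, hc5⟩ := indep_of_notCollinear h2 E4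
    -- block 5 (uR3)
    have E5 : c 7 • (p1 - pR3) + c 8 • (p3 - pR3) = 0 := by
      funext k
      have hk := congrFun h (5, k)
      simp [hM, Matrix.mulVec, dotProduct, rigidityMatrix2D3, constraintRow,
        Fin.sum_univ_succ, Matrix.transpose_apply,
        finSucc3, finSucc4, finSucc5, finSucc6, finSucc7, finSucc8] at hk
      simp only [Pi.add_apply, Pi.smul_apply, Pi.sub_apply, Pi.zero_apply, smul_eq_mul]
      linarith
    obtain ⟨hc7, hc8⟩ := indep_of_notCollinear h3 E5
    -- block 0 (u1): uses rows 0,1,6,7; with c 1 = c 7 = 0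
    have E0 : (-(c 0)) • (p2 - p1) + (-(c 6)) • (p3 - p1) = 0 := by
      funext k
      have hk := congrFun h (0, k)
      simp [hM, Matrix.mulVec, dotProduct, rigidityMatrix2D3, constraintRow,
        Fin.sum_univ_succ, Matrix.transpose_apply,
        finSucc3, finSucc4, finSucc5, finSucc6, finSucc7, finSucc8, hc1, hc7] at hk
      simp only [Pi.add_apply, Pi.smul_apply, Pi.sub_apply, Pi.zero_apply, smul_eq_mul]
      linarith
    have h4' : ¬ Collinear ℝ ({p2, p3, p1} : Set (Fin 2 → ℝ)) := by
      rw [Set.pair_comm p3 p1, Set.insert_comm]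
      exact h4
    obtain ⟨hc0, hc6⟩ := indep_of_notCollinear h4' E0
    rw [neg_eq_zero] at hc0 hc6
    -- block 2 (u3): rows 3,5,6,8; with c 5 = c 6 = c 8 = 0 gives c 3 • (p2 - p3) = 0
    have E2 : c 3 • (p2 - p3) = 0 := by
      funext k
      have hk := congrFun h (2, k)
      simp [hM, Matrix.mulVec, dotProduct, rigidityMatrix2D3, constraintRow,
        Fin.sum_univ_succ, Matrix.transpose_apply,
        finSucc3, finSucc4, finSucc5, finSucc6, finSucc7, finSucc8, hc5, hc6, hc8] at hk
      simp only [Pi.smul_apply, Pi.sub_apply, Pi.zero_apply, smul_eq_mul]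
      rcases hk with h' | h'
      · have hz : p2 k - p3 k = 0 := by linarith
        rw [hz, mul_zero]
      · rw [h', zero_mul]
    have hp23 : p2 - p3 ≠ 0 := by
      intro hz
      apply h4
      have : p2 = p3 := by
        have := congrFun hz
        funext k; have := this k; simp only [Pi.sub_apply, Pi.zero_apply] at this; linarith
      rw [this]
      exact (collinear_pair ℝ p1 p3).subset (by simp [Set.insert_subset_iff])
    have hc3 : c 3 = 0 := by
      rcases smul_eq_zero.mp E2 with h' | h'
      · exact h'
      · exact absurd h' hp23
    funext r
    fin_cases r <;> simp_all
  have hkerT : LinearMap.ker M.transpose.mulVecLin = ⊥ := by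
    rw [LinearMap.ker_eq_bot']
    intro c hc
    exact hinj c (by rwa [Matrix.mulVecLin_apply] at hc)
  have hrankT : M.transpose.rank = 9 := by
    have hrn := LinearMap.finrank_range_add_finrank_ker M.transpose.mulVecLin
    rw [hkerT, finrank_bot] at hrn
    have hdom : Module.finrank ℝ (Fin 9 → ℝ) = 9 := by simp
    rw [hdom] at hrn
    simpa [Matrix.rank] using hrn
  have hrank : M.rank = 9 := by
    rw [← Matrix.rank_transpose]
    exact hrankT
  refine ⟨hrank, ?_⟩
  have hrn := LinearMap.finrank_range_add_finrank_ker M.mulVecLin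
  have hdom : Module.finrank ℝ (Fin 6 × Fin 2 → ℝ) = 12 := by simp
  rw [hdom] at hrn
  have : Module.finrank ℝ (LinearMap.range M.mulVecLin) = 9 := hrank
  omega
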